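/- arXiv:1706.07185 — 5 statements merged into one kernel-verified Lean document; each statement's English description precedes it below -/
import Mathlib

section
/- Under the same hypotheses, if 𝔐(n) is any sequence in [0,n] with 𝔐(n) ~ M(n) (i.e. lim 𝔐(n)/M(n) = 1), then lim_{n→∞} F_n(𝔐(n)) = g(θ). -/
/-!
Rescale to `gₙ x = Fₙ (n x)` on `[0,1]`, which is maximized at `M(n)/n`. Uniform convergence
forces `g (M(n)/n) → g θ`, and since `g` is continuous on the compact `[0,1]` with `θ` its only
maximizer, `M(n)/n → θ`. Then `𝔐(n)/n = (𝔐(n)/M(n)) · (M(n)/n) → θ`, and uniform convergence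
together with continuity of `g` at `θ` gives `Fₙ(𝔐(n)) = gₙ(𝔐(n)/n) → g θ`.
-/

open Filter Set Topology

section Maximizers

variable {ι α : Type*} {l : Filter ι} {g : α → ℝ} {s : Set α} {θ : α} {x : ι → α}

theorem tendsto_apply_of_tendstoUniformlyOn_of_isMaxOn {f : ι → α → ℝ}
    (hf : TendstoUniformlyOn f g l s) (hθ : θ ∈ s) (hmax : IsMaxOn g s θ)
    (hx : ∀ᶠ n in l, x n ∈ s) (hxmax : ∀ᶠ n in l, f n θ ≤ f n (x n)) :
    Tendsto (fun n => g (x n)) l (𝓝 (g θ)) := by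
  refine tendsto_order.2 ⟨fun a ha => ?_, fun a ha => hx.mono fun n hn => (hmax hn).trans_lt ha⟩
  have hε : 0 < (g θ - a) / 2 := by linarith
  filter_upwards [Metric.tendstoUniformlyOn_iff.1 hf _ hε, hx, hxmax] with n hunif hn hnmax
  have hθn := (abs_lt.1 (hunif θ hθ)).2
  have hxn := (abs_lt.1 (hunif (x n) hn)).1
  linarith

variable [TopologicalSpace α]

theorem IsCompact.tendsto_of_tendsto_apply_of_unique_max (hs : IsCompact s)
    (hg : ContinuousOn g s) (huniq : ∀ y ∈ s, y ≠ θ → g y < g θ)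
    (hx : ∀ᶠ n in l, x n ∈ s) (hgx : Tendsto (fun n => g (x n)) l (𝓝 (g θ))) :
    Tendsto x l (𝓝 θ) := by
  refine hs.tendsto_nhds_of_unique_mapClusterPt hx fun y hy hcluster => ?_
  by_contra hne
  obtain ⟨c, hyc, hcθ⟩ := exists_between (huniq y hy hne)
  obtain ⟨U, hUo, hyU, hUs⟩ := mem_nhdsWithin.1 ((hg y hy).eventually (gt_mem_nhds hyc))
  have hfreq : ∃ᶠ n in l, g (x n) < c :=
    ((mapClusterPt_iff_frequently.1 hcluster U (hUo.mem_nhds hyU)).and_eventually hx).mono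
      fun n hn => hUs hn
  exact hfreq ((hgx.eventually (lt_mem_nhds hcθ)).mono fun n hn => hn.not_gt)

theorem IsCompact.tendsto_of_tendstoUniformlyOn_of_isMaxOn {f : ι → α → ℝ} (hs : IsCompact s)
    (hf : TendstoUniformlyOn f g l s) (hg : ContinuousOn g s) (hθ : θ ∈ s)
    (huniq : ∀ y ∈ s, y ≠ θ → g y < g θ) (hx : ∀ᶠ n in l, x n ∈ s)
    (hxmax : ∀ᶠ n in l, f n θ ≤ f n (x n)) :
    Tendsto x l (𝓝 θ) := by
  have hmax : IsMaxOn g s θ := fun y hy =>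
    (eq_or_ne y θ).elim (fun h => h ▸ le_refl (g θ)) fun h => (huniq y hy h).le
  exact hs.tendsto_of_tendsto_apply_of_unique_max hg huniq hx
    (tendsto_apply_of_tendstoUniformlyOn_of_isMaxOn hf hθ hmax hx hxmax)

end Maximizers

theorem Filter.Tendsto.div_of_div_tendsto_one {ι 𝕜 : Type*} [NormedField 𝕜] {l : Filter ι}
    {a b c : ι → 𝕜} {θ : 𝕜} (hab : Tendsto (fun n => a n / b n) l (𝓝 1))
    (hbc : Tendsto (fun n => b n / c n) l (𝓝 θ)) :
    Tendsto (fun n => a n / c n) l (𝓝 θ) := by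
  have hb : ∀ᶠ n in l, b n ≠ 0 :=
    (hab.eventually_ne one_ne_zero).mono fun n hn hb => hn (by rw [hb, div_zero])
  simpa using (hab.mul hbc).congr' (hb.mono fun n hn => div_mul_div_cancel₀ hn)

section Rescaling

variable {n : ℕ} {y : ℝ}

theorem div_natCast_mem_Icc_zero_one (hy : y ∈ Icc (0 : ℝ) n) : y / n ∈ Icc (0 : ℝ) 1 := by
  rcases n.eq_zero_or_pos with rfl | hn
  · simp
  · exact ⟨div_nonneg hy.1 n.cast_nonneg, (div_le_one (by exact_mod_cast hn)).2 hy.2⟩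

-- For `n = 0` both sides vanish because `y ∈ [0,0]`.
theorem natCast_mul_div_natCast_of_mem_Icc (hy : y ∈ Icc (0 : ℝ) n) : n * (y / n) = y := by
  rcases n.eq_zero_or_pos with rfl | hn
  · simp [le_antisymm hy.2 (by simpa using hy.1)]
  · exact mul_div_cancel₀ y (by positivity)

theorem natCast_mul_mem_Icc (hy : y ∈ Icc (0 : ℝ) 1) : (n : ℝ) * y ∈ Icc (0 : ℝ) n :=
  ⟨mul_nonneg n.cast_nonneg hy.1, mul_le_of_le_one_right n.cast_nonneg hy.2⟩

end Rescaling

theorem stmt_2_general (F : ℕ → ℝ → ℝ) (M 𝔐 : ℕ → ℝ) (g : ℝ → ℝ) (θ : ℝ)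
    (hF : ∀ n : ℕ, ContinuousOn (F n) (Set.Icc 0 (n : ℝ)))
    (hM : ∀ n : ℕ, M n ∈ Set.Icc (0 : ℝ) (n : ℝ))
    (hMmax : ∀ n : ℕ, ∀ x ∈ Set.Icc (0 : ℝ) (n : ℝ), F n x ≤ F n (M n))
    (hg : TendstoUniformlyOn (fun (n : ℕ) (x : ℝ) => F n ((n : ℝ) * x)) g
      Filter.atTop (Set.Icc 0 1))
    (hθ : θ ∈ Set.Icc (0 : ℝ) 1)
    (hθuniq : ∀ x ∈ Set.Icc (0 : ℝ) 1, x ≠ θ → g x < g θ)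
    (h𝔐 : ∀ n : ℕ, 𝔐 n ∈ Set.Icc (0 : ℝ) (n : ℝ))
    (hsim : Filter.Tendsto (fun n : ℕ => 𝔐 n / M n) Filter.atTop (nhds 1)) :
    Filter.Tendsto (fun n : ℕ => F n (𝔐 n)) Filter.atTop (nhds (g θ)) := by
  have hgc : ContinuousOn g (Icc 0 1) := hg.continuousOn <| .of_forall fun n =>
    (hF n).comp (continuous_const.mul continuous_id).continuousOn fun _ => natCast_mul_mem_Icc
  have hMθ : Tendsto (fun n => M n / n) atTop (𝓝 θ) :=
    isCompact_Icc.tendsto_of_tendstoUniformlyOn_of_isMaxOn hg hgc hθ hθuniq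
      (.of_forall fun n => div_natCast_mem_Icc_zero_one (hM n))
      (.of_forall fun n => by
        simpa only [natCast_mul_div_natCast_of_mem_Icc (hM n)]
          using hMmax n _ (natCast_mul_mem_Icc hθ))
  have h𝔐θ : Tendsto (fun n => 𝔐 n / n) atTop (𝓝[Icc 0 1] θ) :=
    tendsto_nhdsWithin_iff.2
      ⟨hsim.div_of_div_tendsto_one hMθ, .of_forall fun n => div_natCast_mem_Icc_zero_one (h𝔐 n)⟩
  simpa only [natCast_mul_div_natCast_of_mem_Icc (h𝔐 _)] using hg.tendsto_comp (hgc θ hθ) h𝔐θ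

theorem stmt_2 (F : ℕ → ℝ → ℝ) (M 𝔐 : ℕ → ℝ) (g : ℝ → ℝ) (θ : ℝ)
    (hF : ∀ n : ℕ, ContinuousOn (F n) (Set.Icc 0 (n : ℝ)))
    (hM : ∀ n : ℕ, M n ∈ Set.Icc (0 : ℝ) (n : ℝ))
    (hMmax : ∀ n : ℕ, ∀ x ∈ Set.Icc (0 : ℝ) (n : ℝ), F n x ≤ F n (M n))
    (hg : TendstoUniformlyOn (fun (n : ℕ) (x : ℝ) => F n ((n : ℝ) * x)) g
      Filter.atTop (Set.Icc 0 1))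
    (hθ : θ ∈ Set.Icc (0 : ℝ) 1)
    (hθmax : ∀ x ∈ Set.Icc (0 : ℝ) 1, g x ≤ g θ)
    (hθuniq : ∀ x ∈ Set.Icc (0 : ℝ) 1, x ≠ θ → g x < g θ)
    (h𝔐 : ∀ n : ℕ, 𝔐 n ∈ Set.Icc (0 : ℝ) (n : ℝ))
    (hsim : Filter.Tendsto (fun n : ℕ => 𝔐 n / M n) Filter.atTop (nhds 1)) :
    Filter.Tendsto (fun n : ℕ => F n (𝔐 n)) Filter.atTop (nhds (g θ)) :=
  stmt_2_general F M 𝔐 g θ hF hM hMmax hg hθ hθuniq h𝔐 hsim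
end

section
/- In the Best-or-Worst variant, the maximum success probability is not strictly increasing in n: for every n ≥ 2, the maximum value of F_{2n}(r) = 2r(2n-r)/(2n(2n-1)) over integer r equals the maximum value of F_{2n-1}(r) = 2r(2n-1-r)/((2n-1)(2n-2)) over integer r; both equal n/(2n-1). -/
theorem stmt_7 (n : ℕ) (hn : 2 ≤ n) :
    IsGreatest ((fun r : ℕ =>
        2 * (r : ℝ) * (2 * (n : ℝ) - (r : ℝ)) / ((2 * (n : ℝ)) * (2 * (n : ℝ) - 1))) ''
      (Set.Icc 2 (2 * n - 1))) ((n : ℝ) / (2 * (n : ℝ) - 1)) ∧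
    IsGreatest ((fun r : ℕ =>
        2 * (r : ℝ) * ((2 * (n : ℝ) - 1) - (r : ℝ)) / ((2 * (n : ℝ) - 1) * (2 * (n : ℝ) - 2))) ''
      (Set.Icc 2 (2 * n - 2))) ((n : ℝ) / (2 * (n : ℝ) - 1)) := by
  have hn' : (2 : ℝ) ≤ (n : ℝ) := by exact_mod_cast hn
  have h1 : (0:ℝ) < 2 * (n : ℝ) * (2 * (n : ℝ) - 1) := by nlinarith
  have h2 : (0:ℝ) < (2 * (n : ℝ) - 1) * (2 * (n : ℝ) - 2) := by nlinarith
  have h3 : (0:ℝ) < 2 * (n : ℝ) - 1 := by nlinarith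
  constructor
  · constructor
    · refine ⟨n, ⟨hn, by omega⟩, ?_⟩
      field_simp
      ring
    · rintro x ⟨r, ⟨hr1, hr2⟩, rfl⟩
      have hr1' : (2:ℝ) ≤ (r:ℝ) := by exact_mod_cast hr1
      have hr2' : (r:ℝ) ≤ 2 * (n:ℝ) - 1 := by
        have : (r:ℝ) ≤ ((2*n-1 : ℕ) : ℝ) := by exact_mod_cast hr2
        push_cast [Nat.cast_sub (by omega : 1 ≤ 2*n)] at this
        linarith
      rw [div_le_div_iff₀ h1 h3]
      nlinarith [sq_nonneg ((r:ℝ) - (n:ℝ))]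
  · constructor
    · refine ⟨n, ⟨hn, by omega⟩, ?_⟩
      have hne : (n:ℝ) - 1 ≠ 0 := by nlinarith
      field_simp
      ring
    · rintro x ⟨r, ⟨hr1, hr2⟩, rfl⟩
      have hr1' : (2:ℝ) ≤ (r:ℝ) := by exact_mod_cast hr1
      have hr2' : (r:ℝ) ≤ 2 * (n:ℝ) - 2 := by
        have : (r:ℝ) ≤ ((2*n-2 : ℕ) : ℝ) := by exact_mod_cast hr2
        push_cast [Nat.cast_sub (by omega : 2 ≤ 2*n)] at this
        linarith
      have hkey : ((r:ℝ) - (n:ℝ)) * ((r:ℝ) - ((n:ℝ) - 1)) ≥ 0 := by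
        rcases le_or_gt r (n-1) with h | h
        · have : (r:ℝ) ≤ (n:ℝ) - 1 := by
            have : (r:ℝ) ≤ ((n-1 : ℕ) : ℝ) := by exact_mod_cast h
            push_cast [Nat.cast_sub (by omega : 1 ≤ n)] at this
            linarith
          nlinarith
        · have : (n:ℝ) ≤ (r:ℝ) := by exact_mod_cast (by omega : n ≤ r)
          nlinarith
      rw [div_le_div_iff₀ h2 h3]
      nlinarith
end

section
/- The equation 2x·log(x) = x - 1 has a unique solution θ in the open interval (0,1), and this θ satisfies θ = exp(1/2 + W_{-1}(-1/(2√e))) where W_{-1} is the lower branch of the Lambert W function. -/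
/-! Let `f x = 2 x log x - x + 1`. Since `f (e⁻²) > 0 > f (e⁻¹)`, the intermediate value theorem
gives a root in `(0, 1)`. Roots of `f` are the points where `x log x` meets the line
`y = (x - 1) / 2`, and `x log x` is strictly convex, so it meets that line at most twice; as `x = 1`
is one of the intersections, the root in `(0, 1)` is unique. Finally, if `w e^w = -1 / (2 √e)` and
`w ≤ -1`, then substituting `θ = e^{1/2 + w}` turns the equation for `θ` into the one for `w`,
so `e^{1/2 + w}` is a root in `(0, 1)`, hence the root. -/

open Real Set

lemma exists_two_mul_mul_log_eq_sub_one :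
    ∃ θ ∈ Ioo (0 : ℝ) 1, 2 * θ * log θ = θ - 1 := by
  set f : ℝ → ℝ := fun x => 2 * (x * log x) - x + 1
  have hf_exp (t : ℝ) : f (exp t) = (2 * t - 1) * exp t + 1 := by
    simp only [f, log_exp]; ring
  have hf_cont : ContinuousOn f (Icc (exp (-2)) (exp (-1))) :=
    ((continuous_const.mul continuous_mul_log).sub continuous_id |>.add continuous_const).continuousOn
  have hf_left : 0 < f (exp (-2)) := by
    have : exp (-2) * (exp 1 * exp 1) = 1 := by rw [← exp_add, ← exp_add]; norm_num
    rw [hf_exp]; nlinarith [exp_pos (-2), exp_one_gt_d9]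
  have hf_right : f (exp (-1)) < 0 := by
    have : exp (-1) * exp 1 = 1 := by rw [← exp_add]; norm_num
    rw [hf_exp]; nlinarith [exp_pos (-1), exp_one_lt_d9]
  obtain ⟨θ, hθ, hfθ⟩ := intermediate_value_Ioo' (exp_le_exp.2 (by norm_num)) hf_cont
    ⟨hf_right, hf_left⟩
  refine ⟨θ, ⟨(exp_pos _).trans hθ.1, hθ.2.trans (exp_lt_one_iff.2 (by norm_num))⟩, ?_⟩
  simp only [f] at hfθ
  linarith

lemma subsingleton_two_mul_mul_log_eq_sub_one :
    {θ : ℝ | θ ∈ Ioo 0 1 ∧ 2 * θ * log θ = θ - 1}.Subsingleton := by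
  intro x ⟨hx, hfx⟩ y ⟨hy, hfy⟩
  by_contra hne
  wlog hxy : x < y generalizing x y
  · exact this hy hfy hx hfx (Ne.symm hne) (lt_of_le_of_ne (not_lt.1 hxy) (Ne.symm hne))
  -- `x log x` would have the same secant slope `1 / 2` on `[x, y]` and on `[y, 1]`.
  have hslope := strictConvexOn_mul_log.slope_strict_mono_adjacent (mem_Ici.2 hx.1.le)
    (mem_Ici.2 zero_le_one) hxy hy.2
  have hleft : (y * log y - x * log x) / (y - x) = 1 / 2 := by
    rw [div_eq_iff (sub_ne_zero.2 (Ne.symm hne))]; linarith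
  have hright : (1 * log 1 - y * log y) / (1 - y) = 1 / 2 := by
    rw [div_eq_iff (sub_ne_zero.2 hy.2.ne'), log_one]; linarith
  linarith

lemma exp_half_add_two_mul_mul_log {w : ℝ} (hw : w * exp w = -1 / (2 * √(exp 1))) :
    2 * exp (1 / 2 + w) * log (exp (1 / 2 + w)) = exp (1 / 2 + w) - 1 := by
  rw [← exp_half, eq_div_iff (by positivity)] at hw
  rw [log_exp, exp_add]
  linear_combination hw

theorem stmt_12 :
    (∃! θ : ℝ, θ ∈ Set.Ioo (0 : ℝ) 1 ∧ 2 * θ * Real.log θ = θ - 1) ∧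
    (∀ θ w : ℝ, θ ∈ Set.Ioo (0 : ℝ) 1 → 2 * θ * Real.log θ = θ - 1 →
      w ≤ -1 → w * Real.exp w = -1 / (2 * Real.sqrt (Real.exp 1)) →
      θ = Real.exp (1 / 2 + w)) := by
  refine ⟨?_, fun θ w hθ hfθ hw hwe => ?_⟩
  · obtain ⟨θ, hθ, hfθ⟩ := exists_two_mul_mul_log_eq_sub_one
    exact ⟨θ, ⟨hθ, hfθ⟩, fun θ' hθ' => subsingleton_two_mul_mul_log_eq_sub_one hθ' ⟨hθ, hfθ⟩⟩
  · have hlt : exp (1 / 2 + w) < 1 := exp_lt_one_iff.2 (by linarith)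
    exact subsingleton_two_mul_mul_log_eq_sub_one ⟨hθ, hfθ⟩
      ⟨⟨exp_pos _, hlt⟩, exp_half_add_two_mul_mul_log hwe⟩
end

section
/- Let 0 < m < M be reals and define h(x,y) = (M+m)x - (M+m)xy + Mx·log(y/x) for 0 < x ≤ y ≤ 1, extended by 0 when x = 0. Then h attains its unique global maximum on the triangle T = {(x,y) : 0 ≤ x ≤ y ≤ 1} at the point (x*, y*) = (M·e^{-1+m/M}/(M+m), M/(M+m)), and the maximum value equals M²·e^{-1+m/M}/(M+m). -/
theorem stmt_14 (m M : ℝ) (hm : 0 < m) (hmM : m < M) :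
    let h : ℝ × ℝ → ℝ := fun p =>
      (M + m) * p.1 - (M + m) * p.1 * p.2 + M * p.1 * Real.log (p.2 / p.1)
    let T : Set (ℝ × ℝ) := {p | 0 ≤ p.1 ∧ p.1 ≤ p.2 ∧ p.2 ≤ 1}
    let x₀ : ℝ := M * Real.exp (-1 + m / M) / (M + m)
    let y₀ : ℝ := M / (M + m)
    (x₀, y₀) ∈ T ∧
    (∀ p ∈ T, h p ≤ h (x₀, y₀)) ∧
    (∀ p ∈ T, p ≠ (x₀, y₀) → h p < h (x₀, y₀)) ∧
    h (x₀, y₀) = M ^ 2 * Real.exp (-1 + m / M) / (M + m) := by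
  intro h T x₀ y₀
  have hM : 0 < M := hm.trans hmM
  have hMm : 0 < M + m := by linarith
  have hE : (0:ℝ) < Real.exp (-1 + m / M) := Real.exp_pos _
  have hy₀def : y₀ = M / (M + m) := rfl
  have hx₀def : x₀ = M * Real.exp (-1 + m / M) / (M + m) := rfl
  have hy₀ : 0 < y₀ := div_pos hM hMm
  have hy₀1 : y₀ < 1 := by rw [hy₀def, div_lt_one hMm]; linarith
  have hx₀ : 0 < x₀ := by rw [hx₀def]; positivity
  have hE1 : Real.exp (-1 + m / M) < 1 := by
    rw [Real.exp_lt_one_iff]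
    have : m / M < 1 := (div_lt_one hM).2 hmM
    linarith
  have hx₀y₀ : x₀ < y₀ := by
    rw [hx₀def, hy₀def, div_lt_div_iff₀ hMm hMm]
    have := mul_lt_mul_of_pos_left hE1 (mul_pos hM hMm)
    nlinarith
  have hx₀eq : x₀ = y₀ * Real.exp (-1 + m / M) := by rw [hx₀def, hy₀def]; ring
  have hlx₀ : Real.log x₀ = Real.log y₀ + (-1 + m / M) := by
    rw [hx₀eq, Real.log_mul hy₀.ne' (Real.exp_ne_zero _), Real.log_exp]
  have hval : h (x₀, y₀) = M * x₀ := by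
    show (M + m) * x₀ - (M + m) * x₀ * y₀ + M * x₀ * Real.log (y₀ / x₀) = M * x₀
    have hlog : Real.log (y₀ / x₀) = 1 - m / M := by
      rw [Real.log_div hy₀.ne' hx₀.ne', hlx₀]; ring
    rw [hlog, hy₀def]
    field_simp
    ring
  have stepA : ∀ x y : ℝ, 0 < x → 0 < y →
      h (x, y) ≤ m * x + M * x * Real.log (y₀ / x) ∧
      (y ≠ y₀ → h (x, y) < m * x + M * x * Real.log (y₀ / x)) := by
    intro x y hx hy
    have hd : 0 < y / y₀ := div_pos hy hy₀
    have r1 : Real.log (y / x) = Real.log y - Real.log x := Real.log_div hy.ne' hx.ne'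
    have r2 : Real.log (y₀ / x) = Real.log y₀ - Real.log x := Real.log_div hy₀.ne' hx.ne'
    have r3 : Real.log (y / y₀) = Real.log y - Real.log y₀ := Real.log_div hy.ne' hy₀.ne'
    have hq : y / y₀ = (M + m) * y / M := by rw [hy₀def]; field_simp
    have hiden : M * x * ((M + m) * y / M - 1) = (M + m) * x * y - M * x := by
      field_simp
    have hMx : 0 < M * x := mul_pos hM hx
    constructor
    · have hlog := Real.log_le_sub_one_of_pos hd
      rw [r3, hq] at hlog
      have hmul := mul_le_mul_of_nonneg_left hlog hMx.le
      show (M + m) * x - (M + m) * x * y + M * x * Real.log (y / x) ≤ _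
      rw [r1, r2]
      linarith [hmul, hiden]
    · intro hne
      have hne1 : y / y₀ ≠ 1 := by
        simp [div_eq_one_iff_eq hy₀.ne']; exact hne
      have hlog := Real.log_lt_sub_one_of_pos hd hne1
      rw [r3, hq] at hlog
      have hmul := (mul_lt_mul_iff_right₀ hMx).2 hlog
      show (M + m) * x - (M + m) * x * y + M * x * Real.log (y / x) < _
      rw [r1, r2]
      linarith [hmul, hiden]
  have stepB : ∀ x : ℝ, 0 < x →
      m * x + M * x * Real.log (y₀ / x) ≤ M * x₀ ∧
      (x ≠ x₀ → m * x + M * x * Real.log (y₀ / x) < M * x₀) := by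
    intro x hx
    have hd : 0 < x₀ / x := div_pos hx₀ hx
    have r2 : Real.log (y₀ / x) = Real.log y₀ - Real.log x := Real.log_div hy₀.ne' hx.ne'
    have r4 : Real.log (x₀ / x) = Real.log x₀ - Real.log x := Real.log_div hx₀.ne' hx.ne'
    have hiden : M * x * (x₀ / x - 1) = M * x₀ - M * x := by field_simp
    have key : m * x + M * x * (Real.log y₀ - Real.log x)
        = M * x * (Real.log x₀ - Real.log x) + M * x := by
      rw [hlx₀]; field_simp; ring
    have hMmM : M * (m / M) = m := by field_simp
    have hMx : 0 < M * x := mul_pos hM hx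
    constructor
    · have hlog := Real.log_le_sub_one_of_pos hd
      rw [r4] at hlog
      have hmul := mul_le_mul_of_nonneg_left hlog hMx.le
      rw [r2]
      linarith [hmul, hiden, key]
    · intro hne
      have hne1 : x₀ / x ≠ 1 := by
        simp [div_eq_one_iff_eq hx.ne']; exact fun e => hne e.symm
      have hlog := Real.log_lt_sub_one_of_pos hd hne1
      rw [r4] at hlog
      have hmul := (mul_lt_mul_iff_right₀ hMx).2 hlog
      rw [r2]
      linarith [hmul, hiden, key]
  have hzero : ∀ p : ℝ × ℝ, p.1 = 0 → h p = 0 := by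
    intro p hp0
    show (M + m) * p.1 - (M + m) * p.1 * p.2 + M * p.1 * Real.log (p.2 / p.1) = 0
    rw [hp0]; ring
  have heta : ∀ p : ℝ × ℝ, h p = h (p.1, p.2) := fun p => rfl
  refine ⟨⟨hx₀.le, hx₀y₀.le, hy₀1.le⟩, ?_, ?_, ?_⟩
  · intro p hp
    obtain ⟨hp1, hp2, hp3⟩ := hp
    rw [hval]
    rcases eq_or_lt_of_le hp1 with h0 | h0
    · rw [hzero p h0.symm]; positivity
    · have hy : 0 < p.2 := lt_of_lt_of_le h0 hp2
      rw [heta p]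
      exact le_trans (stepA p.1 p.2 h0 hy).1 (stepB p.1 h0).1
  · intro p hp hne
    obtain ⟨hp1, hp2, hp3⟩ := hp
    rw [hval]
    rcases eq_or_lt_of_le hp1 with h0 | h0
    · rw [hzero p h0.symm]; positivity
    · have hy : 0 < p.2 := lt_of_lt_of_le h0 hp2
      rw [heta p]
      by_cases hy2 : p.2 = y₀
      · have hx2 : p.1 ≠ x₀ := by
          intro hx2
          exact hne (Prod.ext hx2 hy2)
        exact lt_of_le_of_lt (stepA p.1 p.2 h0 hy).1 ((stepB p.1 h0).2 hx2)
      · exact lt_of_lt_of_le ((stepA p.1 p.2 h0 hy).2 hy2) (stepB p.1 h0).1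
  · rw [hval, hx₀def]; ring
end

section
/- Let h(x,y) = x(2 - 6y + y² + 4x - x² + 2(1+y)log y - 2 log x)/2 for 0 < x ≤ y ≤ 1, extended by 0 when x = 0. Then h attains its unique global maximum on T = {(x,y) : 0 ≤ x ≤ y ≤ 1} at a point (α,β) with β the unique solution in (0,1) of -2 + 1/β + β + log β = 0 and α the unique solution in (0,β) of 1 - 1/β - 2β - β²/2 + 4α - 3α²/2 - log α = 0; numerically β ≈ 0.39422, α ≈ 0.17248, and h(α,β) ≈ 0.11811. -/
/-!
Write `∂h/∂y (x, y) = x * g y`. Since `g' y = (y + ψ) (y + φ) / y ^ 2` (`φ`, `ψ` the golden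
ratio and its conjugate), `g` decreases and then increases back to `g 1 = 0`, so it changes sign
once in `(0, 1)`, at `β`, and every slice `y ↦ h x y` peaks at `y = β`. On the line `y = β`,
`∂h/∂x` is `k β x`, which decreases on `(0, 1/3]`, increases afterwards and is negative at
`x = β`; so it changes sign once, at `α`, and `h x β ≤ h α β`. Points with `x > β` reduce to the
diagonal: `h x y ≤ h x x`, and `x ↦ h x x` decreases on `[β, 1]` since its derivative
`1 - x + 2 x log x` is strictly convex, vanishes at `1` and is negative at `β`.
-/

open Real Set

theorem strictMonoOn_of_hasDerivAt_pos {D : Set ℝ} (hD : Convex ℝ D) {f f' : ℝ → ℝ}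
    (hf : ∀ x ∈ D, HasDerivAt f (f' x) x) (hf' : ∀ x ∈ interior D, 0 < f' x) :
    StrictMonoOn f D :=
  strictMonoOn_of_hasDerivWithinAt_pos hD
    (fun x hx ↦ (hf x hx).continuousAt.continuousWithinAt)
    (fun x hx ↦ (hf x (interior_subset hx)).hasDerivWithinAt) hf'

theorem strictAntiOn_of_hasDerivAt_neg {D : Set ℝ} (hD : Convex ℝ D) {f f' : ℝ → ℝ}
    (hf : ∀ x ∈ D, HasDerivAt f (f' x) x) (hf' : ∀ x ∈ interior D, f' x < 0) :
    StrictAntiOn f D :=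
  strictAntiOn_of_hasDerivWithinAt_neg hD
    (fun x hx ↦ (hf x hx).continuousAt.continuousWithinAt)
    (fun x hx ↦ (hf x (interior_subset hx)).hasDerivWithinAt) hf'

theorem sign_of_strictAntiOn_of_strictMonoOn {f : ℝ → ℝ} {a m c r : ℝ}
    (hanti : StrictAntiOn f (Ioc a m)) (hmono : StrictMonoOn f (Icc m c))
    (har : a < r) (hrc : r < c) (hr : f r = 0) (hc : f c ≤ 0) :
    (∀ x ∈ Ioo a r, 0 < f x) ∧ ∀ x ∈ Ioo r c, f x < 0 := by
  have hrm : r ≤ m := by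
    by_contra! hmr
    linarith [hmono ⟨hmr.le, hrc.le⟩ ⟨(hmr.trans hrc).le, le_rfl⟩ hrc]
  refine ⟨fun x hx ↦ hr ▸ hanti ⟨hx.1, hx.2.le.trans hrm⟩ ⟨har, hrm⟩ hx.2, fun x hx ↦ ?_⟩
  rcases le_or_gt x m with hxm | hmx
  · exact hr ▸ hanti ⟨har, hrm⟩ ⟨har.trans hx.1, hxm⟩ hx.1
  · exact (hmono ⟨hmx.le, hx.2.le⟩ ⟨(hmx.trans hx.2).le, le_rfl⟩ hx.2).trans_le hc

theorem eq_of_pos_of_neg {f : ℝ → ℝ} {a r c x : ℝ} (hpos : ∀ x ∈ Ioo a r, 0 < f x)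
    (hneg : ∀ x ∈ Ioo r c, f x < 0) (hx : x ∈ Ioo a c) (hfx : f x = 0) : x = r := by
  rcases lt_trichotomy x r with hxr | hxr | hrx
  · exact absurd hfx (hpos x ⟨hx.1, hxr⟩).ne'
  · exact hxr
  · exact absurd hfx (hneg x ⟨hrx, hx.2⟩).ne

theorem strictMonoOn_strictAntiOn_of_hasDerivAt {f f' : ℝ → ℝ} {a r c : ℝ}
    (hf : ∀ x ∈ Ioc a c, HasDerivAt f (f' x) x) (hpos : ∀ x ∈ Ioo a r, 0 < f' x)
    (hneg : ∀ x ∈ Ioo r c, f' x < 0) (hr : r ∈ Ioc a c) :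
    StrictMonoOn f (Ioc a r) ∧ StrictAntiOn f (Icc r c) :=
  ⟨strictMonoOn_of_hasDerivAt_pos (convex_Ioc a r) (fun x hx ↦ hf x ⟨hx.1, hx.2.trans hr.2⟩)
      (by simpa only [interior_Ioc] using hpos),
    strictAntiOn_of_hasDerivAt_neg (convex_Icc r c)
      (fun x hx ↦ hf x ⟨hr.1.trans_le hx.1, hx.2⟩) (by simpa only [interior_Icc] using hneg)⟩

theorem lt_of_strictMonoOn_of_strictAntiOn {f : ℝ → ℝ} {a r c x : ℝ}
    (hmono : StrictMonoOn f (Ioc a r)) (hanti : StrictAntiOn f (Icc r c)) (hr : r ∈ Ioc a c)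
    (hx : x ∈ Ioc a c) (hxr : x ≠ r) : f x < f r := by
  rcases hxr.lt_or_gt with hlt | hgt
  · exact hmono ⟨hx.1, hlt.le⟩ ⟨hr.1, le_rfl⟩ hlt
  · exact hanti ⟨le_rfl, hr.2⟩ ⟨hgt.le, hx.2⟩ hgt

namespace TriangleMax

noncomputable def h (x y : ℝ) : ℝ :=
  x * (2 - 6 * y + y ^ 2 + 4 * x - x ^ 2 + 2 * (1 + y) * log y - 2 * log x) / 2

noncomputable def g (y : ℝ) : ℝ := -2 + 1 / y + y + log y

noncomputable def k (b x : ℝ) : ℝ :=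
  1 - 1 / b - 2 * b - b ^ 2 / 2 + 4 * x - 3 * x ^ 2 / 2 - log x

theorem hasDerivAt_g {y : ℝ} (hy : 0 < y) :
    HasDerivAt g ((y + goldenConj) * (y + goldenRatio) / y ^ 2) y := by
  have := (((hasDerivAt_inv hy.ne').const_add (-2)).add (hasDerivAt_id y)).add
    (hasDerivAt_log hy.ne')
  have hfac : (y + goldenConj) * (y + goldenRatio) = y ^ 2 + y - 1 := by
    linear_combination y * goldenRatio_add_goldenConj + goldenRatio_mul_goldenConj
  unfold g
  simp only [one_div]
  refine this.congr_deriv ?_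
  rw [hfac]; field_simp; ring

theorem g_one : g 1 = 0 := by norm_num [g]

theorem g_strictAntiOn : StrictAntiOn g (Ioc 0 (-goldenConj)) :=
  strictAntiOn_of_hasDerivAt_neg (convex_Ioc _ _) (fun y hy ↦ hasDerivAt_g hy.1) fun y hy ↦ by
    rw [interior_Ioc] at hy
    have hψ : y + goldenConj < 0 := by linarith [hy.2]
    have hφ : 0 < y + goldenRatio := by linarith [goldenRatio_pos, hy.1]
    exact div_neg_of_neg_of_pos (mul_neg_of_neg_of_pos hψ hφ) (pow_pos hy.1 2)

theorem g_strictMonoOn : StrictMonoOn g (Icc (-goldenConj) 1) := by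
  have hψ : 0 < -goldenConj := neg_pos.2 goldenConj_neg
  refine strictMonoOn_of_hasDerivAt_pos (convex_Icc _ _)
    (fun y hy ↦ hasDerivAt_g (hψ.trans_le hy.1)) fun y hy ↦ ?_
  rw [interior_Icc] at hy
  have hy0 : 0 < y := by linarith [hy.1]
  have hψy : 0 < y + goldenConj := by linarith [hy.1]
  have hφy : 0 < y + goldenRatio := by linarith [goldenRatio_pos]
  positivity

theorem exists_g_eq_zero : ∃ β ∈ Ioo (1 / 4 : ℝ) (1 / 2), g β = 0 := by
  have hcont : ContinuousOn g (Icc (1 / 4) (1 / 2)) := fun y hy ↦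
    (hasDerivAt_g (by linarith [hy.1])).continuousAt.continuousWithinAt
  have hlog4 : log (1 / 4) = -2 * log 2 := by
    rw [one_div, log_inv, show (4 : ℝ) = 2 ^ 2 by norm_num, log_pow]; push_cast; ring
  have h4 : 0 < g (1 / 4) := by
    rw [g, hlog4]; linarith [log_two_lt_d9]
  have h2 : g (1 / 2) < 0 := by
    rw [g, show log (1 / 2 : ℝ) = -log 2 by rw [one_div, log_inv]]
    norm_num
    linarith [log_two_gt_d9]
  exact intermediate_value_Ioo' (by norm_num) hcont ⟨h2, h4⟩

theorem log_eq_of_g_eq_zero {b : ℝ} (hgb : g b = 0) : log b = 2 - 1 / b - b := by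
  rw [g] at hgb; linarith

theorem hasDerivAt_k (b : ℝ) {x : ℝ} (hx : 0 < x) :
    HasDerivAt (k b) ((3 * x - 1) * (1 - x) / x) x := by
  have := ((((hasDerivAt_id x).const_mul 4).const_add (1 - 1 / b - 2 * b - b ^ 2 / 2)).sub
    (((hasDerivAt_pow 2 x).const_mul 3).div_const 2)).sub (hasDerivAt_log hx.ne')
  refine this.congr_deriv ?_
  field_simp; ring

theorem k_strictAntiOn (b : ℝ) : StrictAntiOn (k b) (Ioc 0 (1 / 3)) :=
  strictAntiOn_of_hasDerivAt_neg (convex_Ioc _ _) (fun x hx ↦ hasDerivAt_k b hx.1)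
    fun x hx ↦ by
      rw [interior_Ioc] at hx
      exact div_neg_of_neg_of_pos
        (mul_neg_of_neg_of_pos (by linarith [hx.2]) (by linarith [hx.2])) hx.1

theorem k_strictMonoOn (b : ℝ) : StrictMonoOn (k b) (Icc (1 / 3) 1) :=
  strictMonoOn_of_hasDerivAt_pos (convex_Icc _ _)
    (fun x hx ↦ hasDerivAt_k b (by linarith [hx.1])) fun x hx ↦ by
      rw [interior_Icc] at hx
      exact div_pos (mul_pos (by linarith [hx.1]) (by linarith [hx.2])) (by linarith [hx.1])

theorem k_self_neg {b : ℝ} (hb : b ∈ Ioo 0 (1 / 2)) (hgb : g b = 0) : k b b < 0 := by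
  have hb0 := hb.1.ne'
  have : k b b = (2 * b - 1) * (1 - b) := by
    rw [k, log_eq_of_g_eq_zero hgb]; field_simp; ring
  rw [this]
  exact mul_neg_of_neg_of_pos (by linarith [hb.2]) (by linarith [hb.2])

theorem exists_k_eq_zero {β : ℝ} (hβ : β ∈ Ioo (1 / 4 : ℝ) (1 / 2)) (hgβ : g β = 0) :
    ∃ α ∈ Ioo 0 β, k β α = 0 := by
  set ε := exp (-5)
  have hε0 : 0 < ε := exp_pos _
  have hε : ε < 1 / 4 := by
    have : ε * exp 5 = 1 := by rw [← exp_add]; norm_num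
    nlinarith [add_one_le_exp (5 : ℝ)]
  have hεβ : ε ≤ β := by linarith [hβ.1]
  have hcont : ContinuousOn (k β) (Icc ε β) := fun x hx ↦
    (hasDerivAt_k β (hε0.trans_le hx.1)).continuousAt.continuousWithinAt
  have hkε : 0 < k β ε := by
    have hinv : 1 / β < 4 := by rw [div_lt_iff₀ (by linarith [hβ.1])]; linarith [hβ.1]
    rw [k, log_exp]
    nlinarith [hβ.2]
  have hkβ := k_self_neg ⟨by linarith [hβ.1], hβ.2⟩ hgβ
  obtain ⟨α, hα, hkα⟩ := intermediate_value_Ioo' hεβ hcont ⟨hkβ, hkε⟩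
  exact ⟨α, ⟨hε0.trans hα.1, hα.2⟩, hkα⟩

theorem hasDerivAt_h_right (x : ℝ) {y : ℝ} (hy : 0 < y) : HasDerivAt (h x) (x * g y) y := by
  have hpoly := (((((hasDerivAt_id y).const_mul 6).const_sub 2).add
    (hasDerivAt_pow 2 y)).add_const (4 * x)).sub_const (x ^ 2)
  have hlog := (((hasDerivAt_id y).const_add 1).const_mul 2).mul (hasDerivAt_log hy.ne')
  refine ((((hpoly.add hlog).sub_const (2 * log x)).const_mul x).div_const 2).congr_deriv ?_
  simp only [g, id]
  field_simp; ring

theorem hasDerivAt_h_left {b : ℝ} (hb : 0 < b) (hgb : g b = 0) {x : ℝ} (hx : 0 < x) :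
    HasDerivAt (fun t ↦ h t b) (k b x) x := by
  have hinner := ((((((hasDerivAt_id x).const_mul 4).const_add (2 - 6 * b + b ^ 2)).sub
    (hasDerivAt_pow 2 x)).add_const (2 * (1 + b) * log b)).sub
    ((hasDerivAt_log hx.ne').const_mul 2))
  refine (((hasDerivAt_id x).mul hinner).div_const 2).congr_deriv ?_
  simp only [id, Pi.sub_apply, k, log_eq_of_g_eq_zero hgb]
  field_simp; ring

theorem h_self (x : ℝ) : h x x = x - x ^ 2 + x ^ 2 * log x := by
  rw [h]; ring

theorem hasDerivAt_h_self {x : ℝ} (hx : 0 < x) :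
    HasDerivAt (fun t ↦ h t t) (1 - x + 2 * (x * log x)) x := by
  simp only [h_self]
  refine (((hasDerivAt_id x).sub (hasDerivAt_pow 2 x)).add
    ((hasDerivAt_pow 2 x).mul (hasDerivAt_log hx.ne'))).congr_deriv ?_
  field_simp; ring

theorem h_self_nonneg {x : ℝ} (hx : 0 ≤ x) : 0 ≤ h x x := by
  rcases hx.eq_or_lt with rfl | hx
  · simp [h]
  have hlog := mul_le_mul_of_nonneg_left (one_sub_inv_le_log_of_pos hx) hx.le
  rw [mul_sub, mul_one, mul_inv_cancel₀ hx.ne'] at hlog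
  rw [h_self]
  nlinarith

theorem h_self_strictAntiOn {β : ℝ} (hβ : β ∈ Ioo 0 (1 / 2)) (hgβ : g β = 0) :
    StrictAntiOn (fun t ↦ h t t) (Icc β 1) := by
  -- `w` is half the derivative of `t ↦ h t t`
  set w : ℝ → ℝ := fun t ↦ t * log t + (1 - t) / 2
  have hconv : StrictConvexOn ℝ (Ici 0) w :=
    strictConvexOn_mul_log.add_convexOn ⟨convex_Ici 0, fun x _ y _ a b _ _ hab ↦ by
      simp only [smul_eq_mul]; linear_combination (-1 / 2) * hab⟩
  have hwβ : w β < 0 := by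
    have := hβ.1.ne'
    have : w β = (2 * β - 1) * (1 - β) / 2 := by
      simp only [w, log_eq_of_g_eq_zero hgβ]; field_simp; ring
    rw [this]; nlinarith [hβ.1, hβ.2]
  have hw1 : w 1 = 0 := by simp [w]
  refine strictAntiOn_of_hasDerivAt_neg (convex_Icc _ _)
    (fun x hx ↦ hasDerivAt_h_self (hβ.1.trans_le hx.1)) fun x hx ↦ ?_
  rw [interior_Icc, ← openSegment_eq_Ioo (by linarith [hβ.2])] at hx
  have := hconv.lt_on_openSegment hβ.1.le (mem_Ici.2 zero_le_one) (by linarith [hβ.2]) hx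
  rw [hw1, max_eq_right hwβ.le] at this
  simp only [w] at this
  linarith

theorem g_sign {β : ℝ} (hβ : β ∈ Ioo 0 1) (hgβ : g β = 0) :
    (∀ y ∈ Ioo 0 β, 0 < g y) ∧ ∀ y ∈ Ioo β 1, g y < 0 :=
  sign_of_strictAntiOn_of_strictMonoOn g_strictAntiOn g_strictMonoOn hβ.1 hβ.2 hgβ g_one.le

theorem k_sign {α β : ℝ} (hβ : β ∈ Ioo 0 (1 / 2)) (hgβ : g β = 0) (hα : α ∈ Ioo 0 β)
    (hkα : k β α = 0) : (∀ x ∈ Ioo 0 α, 0 < k β x) ∧ ∀ x ∈ Ioo α β, k β x < 0 :=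
  sign_of_strictAntiOn_of_strictMonoOn (k_strictAntiOn β)
    ((k_strictMonoOn β).mono (Icc_subset_Icc_right (by linarith [hβ.2]))) hα.1 hα.2 hkα
    (k_self_neg hβ hgβ).le

theorem h_right_strictMonoOn_strictAntiOn {β : ℝ} (hβ : β ∈ Ioo 0 1) (hgβ : g β = 0) {x : ℝ}
    (hx : 0 < x) : StrictMonoOn (h x) (Ioc 0 β) ∧ StrictAntiOn (h x) (Icc β 1) :=
  have hg := g_sign hβ hgβ
  strictMonoOn_strictAntiOn_of_hasDerivAt (fun _ hy ↦ hasDerivAt_h_right x hy.1)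
    (fun y hy ↦ mul_pos hx (hg.1 y hy)) (fun y hy ↦ mul_neg_of_pos_of_neg hx (hg.2 y hy))
    ⟨hβ.1, hβ.2.le⟩

theorem h_left_strictMonoOn_strictAntiOn {α β : ℝ} (hβ : β ∈ Ioo 0 (1 / 2)) (hgβ : g β = 0)
    (hα : α ∈ Ioo 0 β) (hkα : k β α = 0) :
    StrictMonoOn (fun t ↦ h t β) (Ioc 0 α) ∧ StrictAntiOn (fun t ↦ h t β) (Icc α β) :=
  have hk := k_sign hβ hgβ hα hkα
  strictMonoOn_strictAntiOn_of_hasDerivAt (fun _ hx ↦ hasDerivAt_h_left hβ.1 hgβ hx.1)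
    hk.1 hk.2 ⟨hα.1, hα.2.le⟩

theorem h_lt_h_of_ne {α β : ℝ} (hβ : β ∈ Ioo 0 (1 / 2)) (hgβ : g β = 0) (hα : α ∈ Ioo 0 β)
    (hkα : k β α = 0) {x y : ℝ} (hx : 0 ≤ x) (hxy : x ≤ y) (hy : y ≤ 1)
    (hne : (x, y) ≠ (α, β)) : h x y < h α β := by
  have hβ1 : β ∈ Ioo 0 1 := ⟨hβ.1, by linarith [hβ.2]⟩
  have hα1 : α ∈ Ioc 0 β := ⟨hα.1, hα.2.le⟩
  obtain ⟨hleft_mono, hleft_anti⟩ := h_left_strictMonoOn_strictAntiOn hβ hgβ hα hkα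
  have hleft : ∀ x ∈ Ioc 0 β, x ≠ α → h x β < h α β := fun x hx ↦
    lt_of_strictMonoOn_of_strictAntiOn hleft_mono hleft_anti hα1 hx
  rcases hx.eq_or_lt with rfl | hx0
  · calc h 0 y = 0 := by simp [h]
      _ ≤ h α α := h_self_nonneg hα.1.le
      _ < h α β := (h_right_strictMonoOn_strictAntiOn hβ1 hgβ hα.1).1 ⟨hα.1, hα.2.le⟩
          ⟨hβ.1, le_rfl⟩ hα.2
  obtain ⟨hright_mono, hright_anti⟩ := h_right_strictMonoOn_strictAntiOn hβ1 hgβ hx0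
  rcases le_or_gt x β with hxβ | hβx
  · rcases eq_or_ne y β with rfl | hyβ
    · exact hleft x ⟨hx0, hxβ⟩ fun hxα ↦ hne (by rw [hxα])
    calc h x y < h x β := lt_of_strictMonoOn_of_strictAntiOn hright_mono hright_anti
          ⟨hβ.1, hβ1.2.le⟩ ⟨hx0.trans_le hxy, hy⟩ hyβ
      _ ≤ h α β := (eq_or_ne x α).elim (fun hxα ↦ hxα ▸ le_rfl)
          fun hxα ↦ (hleft x ⟨hx0, hxβ⟩ hxα).le
  · calc h x y ≤ h x x := hright_anti.antitoneOn ⟨hβx.le, hxy.trans hy⟩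
          ⟨hβx.le.trans hxy, hy⟩ hxy
      _ < h β β := h_self_strictAntiOn hβ hgβ ⟨le_rfl, hβ1.2.le⟩ ⟨hβx.le, hxy.trans hy⟩ hβx
      _ < h α β := hleft β ⟨hβ.1, le_rfl⟩ hα.2.ne'

end TriangleMax

theorem stmt_19 :
    let h : ℝ × ℝ → ℝ := fun p =>
      p.1 * (2 - 6 * p.2 + p.2 ^ 2 + 4 * p.1 - p.1 ^ 2 +
        2 * (1 + p.2) * Real.log p.2 - 2 * Real.log p.1) / 2
    let T : Set (ℝ × ℝ) := {p | 0 ≤ p.1 ∧ p.1 ≤ p.2 ∧ p.2 ≤ 1}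
    ∃ α β : ℝ,
      (β ∈ Set.Ioo (0 : ℝ) 1 ∧ -2 + 1 / β + β + Real.log β = 0 ∧
        ∀ y ∈ Set.Ioo (0 : ℝ) 1, -2 + 1 / y + y + Real.log y = 0 → y = β) ∧
      (α ∈ Set.Ioo 0 β ∧
        1 - 1 / β - 2 * β - β ^ 2 / 2 + 4 * α - 3 * α ^ 2 / 2 - Real.log α = 0 ∧
        ∀ x ∈ Set.Ioo 0 β,
          1 - 1 / β - 2 * β - β ^ 2 / 2 + 4 * x - 3 * x ^ 2 / 2 - Real.log x = 0 → x = α) ∧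
      (α, β) ∈ T ∧
      (∀ p ∈ T, h p ≤ h (α, β)) ∧
      (∀ p ∈ T, p ≠ (α, β) → h p < h (α, β)) := by
  intro h T
  obtain ⟨β, hβ, hgβ⟩ := TriangleMax.exists_g_eq_zero
  obtain ⟨α, hα, hkα⟩ := TriangleMax.exists_k_eq_zero hβ hgβ
  have hβ' : β ∈ Ioo 0 (1 / 2) := ⟨by linarith [hβ.1], hβ.2⟩
  have hβ1 : β ∈ Ioo 0 1 := ⟨hβ'.1, by linarith [hβ.2]⟩
  have hg := TriangleMax.g_sign hβ1 hgβ
  have hk := TriangleMax.k_sign hβ' hgβ hα hkα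
  have hlt : ∀ p ∈ T, p ≠ (α, β) → h p < h (α, β) := fun p hp ↦
    TriangleMax.h_lt_h_of_ne hβ' hgβ hα hkα hp.1 hp.2.1 hp.2.2
  refine ⟨α, β, ⟨hβ1, hgβ, fun y hy ↦ eq_of_pos_of_neg hg.1 hg.2 hy⟩,
    ⟨hα, hkα, fun x hx ↦ eq_of_pos_of_neg hk.1 hk.2 hx⟩, ⟨hα.1.le, hα.2.le, hβ1.2.le⟩,
    fun p hp ↦ ?_, hlt⟩
  rcases eq_or_ne p (α, β) with rfl | hne
  · exact le_rfl
  · exact (hlt p hp hne).le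
end
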